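/- Let Q be an open subset of ℝ^m and let (uⁿ) be a sequence of measurable functions uⁿ : Q → ℝ such that: (a) for every compact K ⊂ Q the sequence (uⁿ) is uniformly integrable on K and uⁿ → u weakly in L¹(K), i.e. ∫_K uⁿ φ → ∫_K u φ for every φ ∈ L^∞(K); and (b) χ(ξ, uⁿ(z)) → g(z,ξ) weak-* in L^∞(Q × ℝ), i.e. ∫_{Q×ℝ} χ(ξ,uⁿ(z)) ψ(z,ξ) dz dξ → ∫_{Q×ℝ} g(z,ξ) ψ(z,ξ) dz dξ for every ψ ∈ L¹(Q × ℝ), for some g ∈ L^∞(Q × ℝ). Then: (i) for almost every (z,ξ), 0 ≤ g(z,ξ) ≤ 1 when ξ ≥ 0 and −1 ≤ g(z,ξ) ≤ 0 when ξ ≤ 0; (ii) for every compact K ⊂ Q, ∫_K ∫_ℝ |g(z,ξ)| dξ dz ≤ liminf_n ∫_K |uⁿ(z)| dz, so that ξ ↦ g(z,ξ) is integrable for almost every z; and (iii) ∫_ℝ g(z,ξ) dξ = u(z) for almost every z ∈ Q. -/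

import Mathlib

/-!
Testing the weak-* convergence `χ(ξ, uⁿ(z)) ⇀ g` against indicators of finite-measure subsets
of `Q × (0, ∞)` and `Q × (−∞, 0)` transfers the pointwise bounds of `χ` to `g`. Testing it
against the sign of `g` on `K × [−R, R]` gives
`∫∫_K |g| ≤ liminf ∫∫_K |χ(ξ, uⁿ)| = liminf ∫_K |uⁿ|`, because `∫ |χ(ξ, v)| dξ = |v|`;
uniform integrability makes the right side finite, so `g` is integrable on `K × ℝ` and Fubini
applies.

For the identity `∫ g(z, ξ) dξ = u(z)`, note that `∫_{−R}^{R} χ(ξ, v) dξ = v` when `|v| ≤ R`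
and differs from `v` by at most `|v|` otherwise. By uniform integrability,
`∫_t ∫_{−R}^{R} χ(ξ, uⁿ) dξ dz` is therefore close to `∫_t uⁿ` uniformly in `n` once `R` is
large. Letting `n → ∞` (weak-* convergence on `t × [−R, R]`, weak convergence of `uⁿ`) and then
`R → ∞` gives `∫_t ∫ g(z, ξ) dξ dz = ∫_t u` for every measurable `t ⊆ K`.
-/

open MeasureTheory
open scoped ENNReal

noncomputable def kineticChi (ξ u : ℝ) : ℝ :=
  if 0 < ξ ∧ ξ < u then 1 else if u < ξ ∧ ξ < 0 then -1 else 0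

open Filter Set Topology

lemma kineticChi_of_nonneg {v : ℝ} (hv : 0 ≤ v) (ξ : ℝ) :
    kineticChi ξ v = (Ioo 0 v).indicator 1 ξ := by
  by_cases h : 0 < ξ ∧ ξ < v
  · simp [kineticChi, h]
  · have : ¬ (v < ξ ∧ ξ < 0) := fun h' => by linarith [h'.1, h'.2]
    simp [kineticChi, h, this]

lemma kineticChi_of_nonpos {v : ℝ} (hv : v ≤ 0) (ξ : ℝ) :
    kineticChi ξ v = -(Ioo v 0).indicator 1 ξ := by
  have : ¬ (0 < ξ ∧ ξ < v) := fun h' => by linarith [h'.1, h'.2]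
  by_cases h : v < ξ ∧ ξ < 0 <;> simp [kineticChi, h, this]

lemma abs_kineticChi_le_one (ξ v : ℝ) : |kineticChi ξ v| ≤ 1 := by
  unfold kineticChi; split_ifs <;> norm_num

lemma kineticChi_nonneg_of_nonneg_left {ξ : ℝ} (hξ : 0 ≤ ξ) (v : ℝ) : 0 ≤ kineticChi ξ v := by
  unfold kineticChi; split_ifs <;> grind

lemma kineticChi_nonpos_of_nonpos_left {ξ : ℝ} (hξ : ξ ≤ 0) (v : ℝ) : kineticChi ξ v ≤ 0 := by
  unfold kineticChi; split_ifs <;> grind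

lemma kineticChi_nonneg_of_nonneg_right (ξ : ℝ) {v : ℝ} (hv : 0 ≤ v) : 0 ≤ kineticChi ξ v := by
  unfold kineticChi; split_ifs <;> grind

lemma kineticChi_nonpos_of_nonpos_right (ξ : ℝ) {v : ℝ} (hv : v ≤ 0) : kineticChi ξ v ≤ 0 := by
  unfold kineticChi; split_ifs <;> grind

lemma kineticChi_eq_zero_of_abs_le {ξ v : ℝ} (h : |v| ≤ |ξ|) : kineticChi ξ v = 0 := by
  unfold kineticChi
  split_ifs with h₁ h₂
  · rw [abs_of_pos h₁.1, abs_of_pos (h₁.1.trans h₁.2)] at h; linarith [h₁.2]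
  · rw [abs_of_neg h₂.2, abs_of_neg (h₂.1.trans h₂.2)] at h; linarith [h₂.1]
  · rfl

lemma measurable_kineticChi : Measurable (fun p : ℝ × ℝ => kineticChi p.1 p.2) := by
  unfold kineticChi
  refine Measurable.ite ?_ measurable_const (Measurable.ite ?_ measurable_const measurable_const)
  · exact (measurableSet_lt measurable_const measurable_fst).inter
      (measurableSet_lt measurable_fst measurable_snd)
  · exact (measurableSet_lt measurable_snd measurable_fst).inter
      (measurableSet_lt measurable_fst measurable_const)

lemma measurable_kineticChi_comp {E : Type*} [MeasurableSpace E] {f : E → ℝ}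
    (hf : Measurable f) : Measurable (fun p : E × ℝ => kineticChi p.2 (f p.1)) :=
  measurable_kineticChi.comp (measurable_snd.prodMk (hf.comp measurable_fst))

lemma integrable_kineticChi (v : ℝ) : Integrable (fun ξ => kineticChi ξ v) := by
  rcases le_total 0 v with hv | hv
  · simp only [kineticChi_of_nonneg hv]
    exact (integrable_indicator_iff measurableSet_Ioo).2 (integrableOn_const measure_Ioo_lt_top.ne)
  · simp only [kineticChi_of_nonpos hv]
    exact ((integrable_indicator_iff measurableSet_Ioo).2
      (integrableOn_const measure_Ioo_lt_top.ne)).neg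

lemma integral_kineticChi (v : ℝ) : ∫ ξ, kineticChi ξ v = v := by
  rcases le_total 0 v with hv | hv
  · simp only [kineticChi_of_nonneg hv, integral_indicator_one measurableSet_Ioo,
      Real.volume_real_Ioo_of_le hv, sub_zero]
  · simp only [kineticChi_of_nonpos hv, integral_neg, integral_indicator_one measurableSet_Ioo,
      Real.volume_real_Ioo_of_le hv, zero_sub, neg_neg]

lemma integral_abs_kineticChi (v : ℝ) : ∫ ξ, |kineticChi ξ v| = |v| := by
  rcases le_total 0 v with hv | hv
  · simp only [abs_of_nonneg (kineticChi_nonneg_of_nonneg_right _ hv), integral_kineticChi,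
      abs_of_nonneg hv]
  · simp only [abs_of_nonpos (kineticChi_nonpos_of_nonpos_right _ hv), integral_neg,
      integral_kineticChi, abs_of_nonpos hv]

lemma lintegral_ofReal_abs_kineticChi (v : ℝ) :
    ∫⁻ ξ, ENNReal.ofReal |kineticChi ξ v| = ENNReal.ofReal |v| := by
  rw [← ofReal_integral_eq_lintegral_ofReal (integrable_kineticChi v).abs
    (ae_of_all _ fun _ => abs_nonneg _), integral_abs_kineticChi]

lemma setIntegral_Icc_kineticChi_of_abs_le {R v : ℝ} (hv : |v| ≤ R) :
    ∫ ξ in Icc (-R) R, kineticChi ξ v = v := by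
  refine (setIntegral_eq_integral_of_forall_compl_eq_zero fun ξ hξ => ?_).trans
    (integral_kineticChi v)
  exact kineticChi_eq_zero_of_abs_le (hv.trans (not_le.1 fun h => hξ (abs_le.1 h)).le)

lemma abs_setIntegral_kineticChi_sub_le {s : Set ℝ} (hs : MeasurableSet s) (v : ℝ) :
    |(∫ ξ in s, kineticChi ξ v) - v| ≤ |v| := by
  have hsplit := integral_add_compl hs (integrable_kineticChi v)
  rw [integral_kineticChi] at hsplit
  calc |(∫ ξ in s, kineticChi ξ v) - v| = |∫ ξ in sᶜ, kineticChi ξ v| := by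
        rw [← abs_neg]; congr 1; linarith
    _ ≤ ∫ ξ in sᶜ, |kineticChi ξ v| := abs_integral_le_integral_abs
    _ ≤ ∫ ξ, |kineticChi ξ v| :=
        setIntegral_le_integral (integrable_kineticChi v).abs (ae_of_all _ fun _ => abs_nonneg _)
    _ = |v| := integral_abs_kineticChi v

section WeakStar

variable {α ι : Type*} [MeasurableSpace α]

def TendstoWeakStar (l : Filter ι) (f : ι → α → ℝ) (F : α → ℝ) (μ : Measure α) : Prop :=
  ∀ ψ : α → ℝ, Integrable ψ μ →
    Tendsto (fun n => ∫ x, f n x * ψ x ∂μ) l (𝓝 (∫ x, F x * ψ x ∂μ))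

namespace TendstoWeakStar

variable {l : Filter ι} {f : ι → α → ℝ} {F : α → ℝ} {μ : Measure α} {s : Set α}

lemma restrict (h : TendstoWeakStar l f F μ) (hs : MeasurableSet s) :
    TendstoWeakStar l f F (μ.restrict s) := by
  intro ψ hψ
  have key : ∀ G : α → ℝ, ∫ x, G x * s.indicator ψ x ∂μ = ∫ x in s, G x * ψ x ∂μ := by
    intro G
    simp_rw [← indicator_mul_right]
    exact integral_indicator hs
  simpa only [key] using h _ ((integrable_indicator_iff hs).2 hψ)

lemma tendsto_setIntegral (h : TendstoWeakStar l f F μ) (hs : MeasurableSet s) (hμs : μ s < ∞) :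
    Tendsto (fun n => ∫ x in s, f n x ∂μ) l (𝓝 (∫ x in s, F x ∂μ)) := by
  simpa only [mul_one] using h.restrict hs (fun _ => 1) (integrableOn_const hμs.ne)

lemma restrict_of_subset {T : Set α} (h : TendstoWeakStar l f F (μ.restrict T))
    (hs : MeasurableSet s) (hsT : s ⊆ T) : TendstoWeakStar l f F (μ.restrict s) := by
  simpa only [Measure.restrict_restrict_of_subset hsT] using h.restrict hs

lemma tendsto_setIntegral_of_subset {T : Set α} (h : TendstoWeakStar l f F (μ.restrict T))
    (hs : MeasurableSet s) (hsT : s ⊆ T) (hμs : μ s < ∞) :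
    Tendsto (fun n => ∫ x in s, f n x ∂μ) l (𝓝 (∫ x in s, F x ∂μ)) := by
  simpa only [Measure.restrict_restrict_of_subset hsT] using
    h.tendsto_setIntegral hs ((Measure.restrict_apply_le T s).trans_lt hμs)

lemma ae_le [SigmaFinite μ] [l.NeBot] (h : TendstoWeakStar l f F μ) {a : ℝ}
    (hF : ∀ s, MeasurableSet s → μ s < ∞ → IntegrableOn F s μ)
    (hf : ∀ n s, MeasurableSet s → μ s < ∞ → IntegrableOn (f n) s μ)
    (ha : ∀ n, ∀ᵐ x ∂μ, a ≤ f n x) : ∀ᵐ x ∂μ, a ≤ F x := by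
  have hnonneg : 0 ≤ᵐ[μ] fun x => F x - a := by
    refine ae_nonneg_of_forall_setIntegral_nonneg_of_sigmaFinite
      (fun s hs hμs => (hF s hs hμs).sub (integrableOn_const hμs.ne)) fun s hs hμs => ?_
    have hlow : ∀ n, ∫ _ in s, a ∂μ ≤ ∫ x in s, f n x ∂μ := fun n =>
      integral_mono_ae (integrableOn_const hμs.ne) (hf n s hs hμs) (ae_restrict_of_ae (ha n))
    rw [integral_sub (hF s hs hμs) (integrableOn_const hμs.ne), sub_nonneg]
    exact ge_of_tendsto (h.tendsto_setIntegral hs hμs) (Eventually.of_forall hlow)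
  filter_upwards [hnonneg] with x hx
  exact sub_nonneg.1 hx

lemma neg (h : TendstoWeakStar l f F μ) :
    TendstoWeakStar l (fun n x => -f n x) (fun x => -F x) μ := by
  intro ψ hψ
  simpa only [neg_mul, integral_neg] using (h ψ hψ).neg

lemma ae_mem_Icc [SigmaFinite μ] [l.NeBot] (h : TendstoWeakStar l f F μ) {a b : ℝ}
    (hF : ∀ s, MeasurableSet s → μ s < ∞ → IntegrableOn F s μ)
    (hf : ∀ n s, MeasurableSet s → μ s < ∞ → IntegrableOn (f n) s μ)
    (hab : ∀ n, ∀ᵐ x ∂μ, f n x ∈ Icc a b) : ∀ᵐ x ∂μ, F x ∈ Icc a b := by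
  have hlow := h.ae_le hF hf fun n => (hab n).mono fun x hx => hx.1
  have hup := h.neg.ae_le (a := -b) (fun s hs hμs => (hF s hs hμs).neg)
    (fun n s hs hμs => (hf n s hs hμs).neg) fun n => (hab n).mono fun x hx => neg_le_neg hx.2
  filter_upwards [hlow, hup] with x hlx hux
  exact ⟨hlx, neg_le_neg_iff.1 hux⟩

lemma lintegral_le_liminf [IsFiniteMeasure μ] [l.NeBot] (h : TendstoWeakStar l f F μ)
    (hFm : Measurable F) (hF : Integrable F μ) :
    ∫⁻ x, ENNReal.ofReal |F x| ∂μ ≤ liminf (fun n => ∫⁻ x, ENNReal.ofReal |f n x| ∂μ) l := by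
  set ψ : α → ℝ := fun x => if 0 ≤ F x then 1 else -1
  have hψ_le : ∀ x, |ψ x| ≤ 1 := fun x => by simp only [ψ]; split_ifs <;> norm_num
  have hFψ : ∀ x, F x * ψ x = |F x| := fun x => by
    simp only [ψ]; split_ifs with hx
    · rw [mul_one, abs_of_nonneg hx]
    · rw [mul_neg_one, abs_of_neg (not_le.1 hx)]
  have hψ : Integrable ψ μ :=
    (integrable_const (1 : ℝ)).mono'
      (Measurable.ite (measurableSet_le measurable_const hFm) measurable_const
        measurable_const).aestronglyMeasurable (ae_of_all _ hψ_le)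
  have hbound : ∀ n, ENNReal.ofReal (∫ x, f n x * ψ x ∂μ) ≤ ∫⁻ x, ENNReal.ofReal |f n x| ∂μ := by
    intro n
    calc ENNReal.ofReal (∫ x, f n x * ψ x ∂μ) ≤ ‖∫ x, f n x * ψ x ∂μ‖ₑ := by
          rw [Real.enorm_eq_ofReal_abs]; exact ENNReal.ofReal_le_ofReal (le_abs_self _)
      _ ≤ ∫⁻ x, ‖f n x * ψ x‖ₑ ∂μ := enorm_integral_le_lintegral_enorm _
      _ ≤ ∫⁻ x, ENNReal.ofReal |f n x| ∂μ := lintegral_mono fun x => by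
          rw [Real.enorm_eq_ofReal_abs, abs_mul]
          exact ENNReal.ofReal_le_ofReal (mul_le_of_le_one_right (abs_nonneg _) (hψ_le x))
  have hlim : Tendsto (fun n => ENNReal.ofReal (∫ x, f n x * ψ x ∂μ)) l
      (𝓝 (∫⁻ x, ENNReal.ofReal |F x| ∂μ)) := by
    rw [← ofReal_integral_eq_lintegral_ofReal hF.abs (ae_of_all _ fun _ => abs_nonneg _)]
    simp_rw [← hFψ]
    exact (ENNReal.continuous_ofReal.tendsto _).comp (h ψ hψ)
  rw [← hlim.liminf_eq]
  exact liminf_le_liminf (Eventually.of_forall hbound)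

end TendstoWeakStar

end WeakStar

lemma tendsto_of_forall_eventually_abs_sub_le {ι κ : Type*} {l : Filter ι} {l' : Filter κ}
    [l'.NeBot] {x : ι → ℝ} {y : ι → κ → ℝ} {z : κ → ℝ} {a : ℝ}
    (hy : ∀ i, Tendsto (y i) l' (𝓝 (x i))) (hz : Tendsto z l' (𝓝 a))
    (hyz : ∀ δ > 0, ∀ᶠ i in l, ∀ n, |y i n - z n| ≤ δ) : Tendsto x l (𝓝 a) := by
  refine Metric.tendsto_nhds.2 fun ε hε => ?_
  filter_upwards [hyz (ε / 2) (half_pos hε)] with i hi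
  rw [Real.dist_eq]
  exact (le_of_tendsto ((hy i).sub hz).abs (Eventually.of_forall hi)).trans_lt (half_lt_self hε)

lemma IsOpen.ae_restrict_of_forall_isCompact {X : Type*} [TopologicalSpace X]
    [LocallyCompactSpace X] [SecondCountableTopology X] [MeasurableSpace X] {μ : Measure X}
    {Q : Set X} (hQ : IsOpen Q) {p : X → Prop}
    (h : ∀ K, IsCompact K → K ⊆ Q → ∀ᵐ x ∂μ.restrict K, p x) : ∀ᵐ x ∂μ.restrict Q, p x := by
  have : LocallyCompactSpace Q := hQ.locallyCompactSpace
  have hcover : ⋃ n, ((↑) : Q → X) '' compactCovering Q n = Q := by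
    rw [← image_iUnion, iUnion_compactCovering, image_univ, Subtype.range_coe]
  rw [← hcover, ae_restrict_iUnion_iff]
  exact fun n => h _ ((isCompact_compactCovering Q n).image continuous_subtype_val)
    (image_subset_iff.2 fun x _ => x.2)

lemma integrableOn_of_abs_le {α : Type*} [MeasurableSpace α] {μ : Measure α} {F : α → ℝ}
    (hFm : Measurable F) {C : ℝ} (hC : ∀ x, |F x| ≤ C) {s : Set α} (hs : μ s < ∞) :
    IntegrableOn F s μ :=
  Measure.integrableOn_of_bounded hs.ne hFm.aestronglyMeasurable (ae_of_all _ hC)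

section UniformIntegrability

variable {α : Type*} [MeasurableSpace α] {μ : Measure α}

def UniformlyIntegrableOn (u : ℕ → α → ℝ) (K : Set α) (μ : Measure α) : Prop :=
  ∀ ε : ℝ, 0 < ε → ∃ c : ℝ, ∀ n, (∫ z in {z ∈ K | c ≤ |u n z|}, |u n z| ∂μ) < ε

lemma setLIntegral_ofReal_abs_le {f : α → ℝ} (hfm : Measurable f) {K : Set α}
    (hf : IntegrableOn f K μ) (c : ℝ) :
    ∫⁻ z in K, ENNReal.ofReal |f z| ∂μ ≤
      ENNReal.ofReal (∫ z in {z ∈ K | c ≤ |f z|}, |f z| ∂μ) + ENNReal.ofReal c * μ K := by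
  have hB : MeasurableSet {z | c ≤ |f z|} := measurableSet_le measurable_const hfm.abs
  rw [← lintegral_inter_add_sdiff _ K hB]
  gcongr
  · exact (ofReal_integral_eq_lintegral_ofReal (hf.mono_set inter_subset_left).abs
      (ae_of_all _ fun _ => abs_nonneg _)).ge
  · calc ∫⁻ z in K \ {z | c ≤ |f z|}, ENNReal.ofReal |f z| ∂μ
        ≤ ∫⁻ _ in K \ {z | c ≤ |f z|}, ENNReal.ofReal c ∂μ :=
          setLIntegral_mono measurable_const fun z hz =>
            ENNReal.ofReal_le_ofReal (not_le.1 hz.2).le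
      _ ≤ ENNReal.ofReal c * μ K := by
          rw [setLIntegral_const]; gcongr; exact sdiff_subset

lemma UniformlyIntegrableOn.liminf_lintegral_lt_top {u : ℕ → α → ℝ} {K : Set α}
    (hui : UniformlyIntegrableOn u K μ) (hum : ∀ n, Measurable (u n))
    (hint : ∀ n, IntegrableOn (u n) K μ) (hK : μ K < ∞) :
    liminf (fun n => ∫⁻ z in K, ENNReal.ofReal |u n z| ∂μ) atTop < ∞ := by
  obtain ⟨c, hc⟩ := hui 1 one_pos
  have hbound : ∀ n, ∫⁻ z in K, ENNReal.ofReal |u n z| ∂μ ≤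
      ENNReal.ofReal 1 + ENNReal.ofReal c * μ K := fun n =>
    (setLIntegral_ofReal_abs_le (hum n) (hint n) c).trans
      (add_le_add_left (ENNReal.ofReal_le_ofReal (hc n).le) _)
  calc liminf (fun n => ∫⁻ z in K, ENNReal.ofReal |u n z| ∂μ) atTop
      ≤ ENNReal.ofReal 1 + ENNReal.ofReal c * μ K :=
        liminf_le_of_frequently_le' (Frequently.of_forall hbound)
    _ < ∞ :=
        ENNReal.add_lt_top.2 ⟨ENNReal.ofReal_lt_top, ENNReal.mul_lt_top ENNReal.ofReal_lt_top hK⟩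

end UniformIntegrability

section Slices

lemma iUnion_prod_Icc_natCast {E : Type*} (K : Set E) :
    ⋃ R : ℕ, K ×ˢ Icc (-(R : ℝ)) R = K ×ˢ univ := by
  rw [← prod_iUnion]
  congr 1
  refine eq_univ_of_forall fun ξ => mem_iUnion.2 ?_
  obtain ⟨R, hR⟩ := exists_nat_ge |ξ|
  exact ⟨R, abs_le.1 hR⟩

lemma monotone_prod_Icc_natCast {E : Type*} (K : Set E) :
    Monotone fun R : ℕ => K ×ˢ Icc (-(R : ℝ)) R := fun _ _ h =>
  prod_mono subset_rfl (Icc_subset_Icc (neg_le_neg (Nat.cast_le.2 h)) (Nat.cast_le.2 h))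

variable {E : Type*} [MeasurableSpace E] {μ : Measure E}

lemma measure_prod_Icc_lt_top {K : Set E} (hK : μ K < ∞) (R : ℝ) :
    (μ.prod volume) (K ×ˢ Icc (-R) R) < ∞ := by
  rw [Measure.prod_prod]
  exact ENNReal.mul_lt_top hK (by simp [Real.volume_Icc])

lemma ae_snd_ne_zero : ∀ᵐ p ∂(μ.prod volume), p.2 ≠ (0 : ℝ) := by
  have : {p : E × ℝ | ¬p.2 ≠ 0} = univ ×ˢ {0} := by ext; simp
  rw [ae_iff, this, Measure.prod_prod, Real.volume_singleton, mul_zero]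

lemma abs_setIntegral_truncation_sub_le {K : Set E} {f : E → ℝ} (hfm : Measurable f)
    (hf : IntegrableOn f K μ) {t : Set E} (ht : MeasurableSet t) (htK : t ⊆ K) {c R : ℝ}
    (hcR : c ≤ R) :
    |∫ z in t, (∫ ξ in Icc (-R) R, kineticChi ξ (f z)) ∂μ - ∫ z in t, f z ∂μ| ≤
      ∫ z in {z ∈ K | c ≤ |f z|}, |f z| ∂μ := by
  set T : E → ℝ := fun z => ∫ ξ in Icc (-R) R, kineticChi ξ (f z)
  have hTm : StronglyMeasurable T :=
    (measurable_kineticChi_comp hfm).stronglyMeasurable.integral_prod_right'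
  have hle : ∀ z, |T z - f z| ≤ |f z| := fun z =>
    abs_setIntegral_kineticChi_sub_le measurableSet_Icc (f z)
  have hft : IntegrableOn f t μ := hf.mono_set htK
  have hdiff : IntegrableOn (fun z => T z - f z) t μ :=
    hft.abs.mono' (hTm.sub hfm.stronglyMeasurable).aestronglyMeasurable (ae_of_all _ hle)
  have hB : MeasurableSet {z | c ≤ |f z|} := measurableSet_le measurable_const hfm.abs
  have hvanish : ∀ z ∈ t \ {z | c ≤ |f z|}, |T z - f z| = 0 := fun z hz => by
    rw [abs_eq_zero, sub_eq_zero]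
    exact setIntegral_Icc_kineticChi_of_abs_le ((not_le.1 hz.2).le.trans hcR)
  calc |∫ z in t, T z ∂μ - ∫ z in t, f z ∂μ| = |∫ z in t, (T z - f z) ∂μ| := by
        rw [integral_sub ((hdiff.add hft).congr_fun (fun z _ => by simp) ht) hft]
    _ ≤ ∫ z in t, |T z - f z| ∂μ := abs_integral_le_integral_abs
    _ = ∫ z in t ∩ {z | c ≤ |f z|}, |T z - f z| ∂μ :=
        setIntegral_eq_of_subset_of_forall_sdiff_eq_zero ht inter_subset_left
          fun z hz => hvanish z ⟨hz.1, fun h => hz.2 ⟨hz.1, h⟩⟩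
    _ ≤ ∫ z in t ∩ {z | c ≤ |f z|}, |f z| ∂μ :=
        setIntegral_mono_on (hdiff.mono_set inter_subset_left).abs
          (hft.mono_set inter_subset_left).abs (ht.inter hB) fun z _ => hle z
    _ ≤ ∫ z in {z ∈ K | c ≤ |f z|}, |f z| ∂μ :=
        setIntegral_mono_set (hf.mono_set inter_subset_left).abs
          (ae_of_all _ fun _ => abs_nonneg _) (Eventually.of_forall (inter_subset_inter_left _ htK))

variable [SFinite μ]

lemma lintegral_ofReal_abs_kineticChi_prod {f : E → ℝ} (hf : Measurable f) (K : Set E) :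
    ∫⁻ p in K ×ˢ univ, ENNReal.ofReal |kineticChi p.2 (f p.1)| ∂(μ.prod volume) =
      ∫⁻ z in K, ENNReal.ofReal |f z| ∂μ := by
  rw [← Measure.restrict_prod_eq_prod_univ, lintegral_prod _
    ((measurable_kineticChi_comp hf).abs.ennreal_ofReal).aemeasurable]
  simp only [lintegral_ofReal_abs_kineticChi]

lemma integrable_restrict_prod_of_setLIntegral_lt_top {β : Type*} [MeasurableSpace β]
    {ν : Measure β} [SFinite ν] {K : Set E} {F : E × β → ℝ} (hFm : Measurable F)
    (h : ∫⁻ p in K ×ˢ univ, ENNReal.ofReal |F p| ∂(μ.prod ν) < ∞) :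
    Integrable F ((μ.restrict K).prod ν) := by
  refine ⟨hFm.aestronglyMeasurable, ?_⟩
  simpa only [HasFiniteIntegral, Real.enorm_eq_ofReal_abs, Measure.restrict_prod_eq_prod_univ]
    using h

lemma tendsto_setIntegral_prod_Icc {g : E × ℝ → ℝ} {t : Set E} (ht : MeasurableSet t)
    (hg : Integrable g ((μ.restrict t).prod volume)) :
    Tendsto (fun R : ℕ => ∫ p in t ×ˢ Icc (-(R : ℝ)) R, g p ∂(μ.prod volume)) atTop
      (𝓝 (∫ z in t, (∫ ξ, g (z, ξ)) ∂μ)) := by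
  have hg' : IntegrableOn g (⋃ R : ℕ, t ×ˢ Icc (-(R : ℝ)) R) (μ.prod volume) := by
    rwa [iUnion_prod_Icc_natCast, IntegrableOn, ← Measure.restrict_prod_eq_prod_univ]
  have h := tendsto_setIntegral_of_monotone (fun R => ht.prod measurableSet_Icc)
    (monotone_prod_Icc_natCast t) hg'
  rwa [iUnion_prod_Icc_natCast, setIntegral_prod _ (by rwa [iUnion_prod_Icc_natCast] at hg'),
    Measure.restrict_univ] at h

end Slices

section KineticLimit

variable {E : Type*} [MeasurableSpace E] {μ : Measure E} {Q K : Set E} {u : ℕ → E → ℝ}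
  {ubar : E → ℝ} {g : E × ℝ → ℝ}

lemma ae_kineticLimit_mem_Icc [SigmaFinite μ] (hQ : MeasurableSet Q) (hum : ∀ n, Measurable (u n))
    (hgm : Measurable g) (hgb : ∃ C, ∀ p, |g p| ≤ C)
    (hχ : TendstoWeakStar atTop (fun n p => kineticChi p.2 (u n p.1)) g
      ((μ.prod volume).restrict (Q ×ˢ univ)))
    {I : Set ℝ} (hI : MeasurableSet I) {a b : ℝ}
    (hab : ∀ ξ ∈ I, ∀ v, kineticChi ξ v ∈ Icc a b) :
    ∀ᵐ p ∂(μ.prod volume), p ∈ Q ×ˢ I → g p ∈ Icc a b := by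
  obtain ⟨C, hC⟩ := hgb
  have hT : MeasurableSet (Q ×ˢ I) := hQ.prod hI
  have hlim := hχ.restrict_of_subset hT (prod_mono subset_rfl (subset_univ I))
  refine (ae_restrict_iff' hT).1 (hlim.ae_mem_Icc (fun s _ hs => integrableOn_of_abs_le hgm hC hs)
    (fun n s _ hs => integrableOn_of_abs_le (measurable_kineticChi_comp (hum n))
      (fun p => abs_kineticChi_le_one _ _) hs)
    fun n => (ae_restrict_iff' hT).2 (ae_of_all _ fun p hp => hab p.2 hp.2 _))

lemma ae_kineticLimit_bounds [SigmaFinite μ] (hQ : MeasurableSet Q) (hum : ∀ n, Measurable (u n))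
    (hgm : Measurable g) (hgb : ∃ C, ∀ p, |g p| ≤ C)
    (hχ : TendstoWeakStar atTop (fun n p => kineticChi p.2 (u n p.1)) g
      ((μ.prod volume).restrict (Q ×ˢ univ))) :
    ∀ᵐ p ∂((μ.prod volume).restrict (Q ×ˢ univ)),
      (0 ≤ p.2 → 0 ≤ g p ∧ g p ≤ 1) ∧ (p.2 ≤ 0 → -1 ≤ g p ∧ g p ≤ 0) := by
  have hpos := ae_kineticLimit_mem_Icc hQ hum hgm hgb hχ measurableSet_Ioi (a := 0) (b := 1)
    fun ξ hξ v => ⟨kineticChi_nonneg_of_nonneg_left (le_of_lt hξ) v,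
      (abs_le.1 (abs_kineticChi_le_one ξ v)).2⟩
  have hneg := ae_kineticLimit_mem_Icc hQ hum hgm hgb hχ measurableSet_Iio (a := -1) (b := 0)
    fun ξ hξ v => ⟨(abs_le.1 (abs_kineticChi_le_one ξ v)).1,
      kineticChi_nonpos_of_nonpos_left (le_of_lt hξ) v⟩
  rw [ae_restrict_iff' (hQ.prod MeasurableSet.univ)]
  filter_upwards [hpos, hneg, ae_snd_ne_zero] with p hp hn h0 hpQ
  exact ⟨fun h => hp ⟨hpQ.1, lt_of_le_of_ne h h0.symm⟩,
    fun h => hn ⟨hpQ.1, lt_of_le_of_ne h h0⟩⟩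

variable [SFinite μ]

lemma lintegral_kineticLimit_le_liminf (hum : ∀ n, Measurable (u n))
    (hgm : Measurable g) (hgb : ∃ C, ∀ p, |g p| ≤ C)
    (hχ : TendstoWeakStar atTop (fun n p => kineticChi p.2 (u n p.1)) g
      ((μ.prod volume).restrict (Q ×ˢ univ)))
    (hK : MeasurableSet K) (hKQ : K ⊆ Q) (hKfin : μ K < ∞) :
    ∫⁻ p in K ×ˢ univ, ENNReal.ofReal |g p| ∂(μ.prod volume) ≤
      liminf (fun n => ∫⁻ z in K, ENNReal.ofReal |u n z| ∂μ) atTop := by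
  obtain ⟨C, hC⟩ := hgb
  rw [← iUnion_prod_Icc_natCast, setLIntegral_iUnion_of_directed _
    (monotone_prod_Icc_natCast K).directed_le]
  refine iSup_le fun R => ?_
  set S := K ×ˢ Icc (-(R : ℝ)) R
  have hS : MeasurableSet S := hK.prod measurableSet_Icc
  have hSfin := measure_prod_Icc_lt_top hKfin (R : ℝ)
  have : IsFiniteMeasure ((μ.prod volume).restrict S) := isFiniteMeasure_restrict.2 hSfin.ne
  have hlim := hχ.restrict_of_subset hS (prod_mono hKQ (subset_univ _))
  calc ∫⁻ p in S, ENNReal.ofReal |g p| ∂(μ.prod volume)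
      ≤ liminf (fun n => ∫⁻ p in S, ENNReal.ofReal |kineticChi p.2 (u n p.1)| ∂(μ.prod volume))
          atTop := hlim.lintegral_le_liminf hgm (integrableOn_of_abs_le hgm hC hSfin)
    _ ≤ liminf (fun n => ∫⁻ z in K, ENNReal.ofReal |u n z| ∂μ) atTop := by
        refine liminf_le_liminf (Eventually.of_forall fun n => ?_)
        rw [← lintegral_ofReal_abs_kineticChi_prod (hum n)]
        exact lintegral_mono_set (prod_mono subset_rfl (subset_univ _))

lemma setIntegral_integral_kineticLimit_eq (hum : ∀ n, Measurable (u n))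
    (hχ : TendstoWeakStar atTop (fun n p => kineticChi p.2 (u n p.1)) g
      ((μ.prod volume).restrict (Q ×ˢ univ)))
    (hKQ : K ⊆ Q) (hKfin : μ K < ∞) (huint : ∀ n, IntegrableOn (u n) K μ)
    (hui : UniformlyIntegrableOn u K μ)
    (hwk : ∀ φ : E → ℝ, Measurable φ → (∃ C : ℝ, ∀ z, |φ z| ≤ C) →
      Tendsto (fun n => ∫ z in K, u n z * φ z ∂μ) atTop (𝓝 (∫ z in K, ubar z * φ z ∂μ)))
    (hgK : Integrable g ((μ.restrict K).prod volume)) {t : Set E} (ht : MeasurableSet t)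
    (htK : t ⊆ K) :
    ∫ z in t, (∫ ξ, g (z, ξ)) ∂μ = ∫ z in t, ubar z ∂μ := by
  have htfin : μ t < ∞ := (measure_mono htK).trans_lt hKfin
  have hu_lim : Tendsto (fun n => ∫ z in t, u n z ∂μ) atTop (𝓝 (∫ z in t, ubar z ∂μ)) := by
    have key : ∀ F : E → ℝ, ∫ z in K, F z * t.indicator 1 z ∂μ = ∫ z in t, F z ∂μ := fun F => by
      simp only [← indicator_mul_right, Pi.one_apply, mul_one]
      rw [setIntegral_indicator ht, inter_eq_right.2 htK]
    simpa only [key] using hwk _ (measurable_one.indicator ht)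
      ⟨1, fun z => by by_cases hz : z ∈ t <;> simp [hz]⟩
  have hgt : Integrable g ((μ.restrict t).prod volume) := by
    rw [← Measure.restrict_restrict_of_subset htK, Measure.restrict_prod_eq_prod_univ]
    exact hgK.restrict
  refine tendsto_nhds_unique (tendsto_setIntegral_prod_Icc ht hgt)
    (tendsto_of_forall_eventually_abs_sub_le (y := fun (R n : ℕ) =>
      ∫ p in t ×ˢ Icc (-(R : ℝ)) R, kineticChi p.2 (u n p.1) ∂(μ.prod volume))
      (fun R => ?_) hu_lim fun δ hδ => ?_)
  · exact hχ.tendsto_setIntegral_of_subset (ht.prod measurableSet_Icc)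
      (prod_mono (htK.trans hKQ) (subset_univ _)) (measure_prod_Icc_lt_top htfin _)
  · obtain ⟨c, hc⟩ := hui δ hδ
    filter_upwards [eventually_ge_atTop ⌈c⌉₊] with R hR n
    have hχint : IntegrableOn (fun p : E × ℝ => kineticChi p.2 (u n p.1))
        (t ×ˢ Icc (-(R : ℝ)) R) (μ.prod volume) :=
      integrableOn_of_abs_le (measurable_kineticChi_comp (hum n))
        (fun p => abs_kineticChi_le_one _ _) (measure_prod_Icc_lt_top htfin _)
    rw [setIntegral_prod _ hχint]
    exact (abs_setIntegral_truncation_sub_le (hum n) (huint n) ht htK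
      ((Nat.le_ceil c).trans (Nat.cast_le.2 hR))).trans (hc n).le

lemma ae_integral_kineticLimit_eq (hum : ∀ n, Measurable (u n))
    (hχ : TendstoWeakStar atTop (fun n p => kineticChi p.2 (u n p.1)) g
      ((μ.prod volume).restrict (Q ×ˢ univ)))
    (hK : MeasurableSet K) (hKQ : K ⊆ Q) (hKfin : μ K < ∞) (huint : ∀ n, IntegrableOn (u n) K μ)
    (hubar : IntegrableOn ubar K μ) (hui : UniformlyIntegrableOn u K μ)
    (hwk : ∀ φ : E → ℝ, Measurable φ → (∃ C : ℝ, ∀ z, |φ z| ≤ C) →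
      Tendsto (fun n => ∫ z in K, u n z * φ z ∂μ) atTop (𝓝 (∫ z in K, ubar z * φ z ∂μ)))
    (hgK : Integrable g ((μ.restrict K).prod volume)) :
    ∀ᵐ z ∂μ.restrict K, ∫ ξ, g (z, ξ) = ubar z := by
  have : IsFiniteMeasure (μ.restrict K) := isFiniteMeasure_restrict.2 hKfin.ne
  refine ae_eq_of_forall_setIntegral_eq_of_sigmaFinite
    (fun s _ _ => hgK.integral_prod_left.integrableOn) (fun s _ _ => hubar.integrableOn)
    fun s hs _ => ?_
  rw [Measure.restrict_restrict hs]
  exact setIntegral_integral_kineticLimit_eq hum hχ hKQ hKfin huint hui hwk hgK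
    (hs.inter hK) inter_subset_right

end KineticLimit

theorem kinetic_function_represents_weak_limit_general
    {m : ℕ} (Q : Set (EuclideanSpace ℝ (Fin m))) (hQ : IsOpen Q)
    (u : ℕ → EuclideanSpace ℝ (Fin m) → ℝ) (hum : ∀ n, Measurable (u n))
    (ubar : EuclideanSpace ℝ (Fin m) → ℝ)
    (hint : ∀ K : Set (EuclideanSpace ℝ (Fin m)), IsCompact K → K ⊆ Q →
      (∀ n, IntegrableOn (u n) K) ∧ IntegrableOn ubar K)
    (hui : ∀ K : Set (EuclideanSpace ℝ (Fin m)), IsCompact K → K ⊆ Q →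
      ∀ ε : ℝ, 0 < ε → ∃ c : ℝ, ∀ n,
        (∫ z in {z ∈ K | c ≤ |u n z|}, |u n z|) < ε)
    (hwk : ∀ K : Set (EuclideanSpace ℝ (Fin m)), IsCompact K → K ⊆ Q →
      ∀ φ : EuclideanSpace ℝ (Fin m) → ℝ, Measurable φ → (∃ C : ℝ, ∀ z, |φ z| ≤ C) →
        Filter.Tendsto (fun n => ∫ z in K, u n z * φ z) Filter.atTop
          (nhds (∫ z in K, ubar z * φ z)))
    (g : EuclideanSpace ℝ (Fin m) × ℝ → ℝ) (hgm : Measurable g)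
    (hgb : ∃ C : ℝ, ∀ p, |g p| ≤ C)
    (hwkchi : ∀ ψ : EuclideanSpace ℝ (Fin m) × ℝ → ℝ,
      Integrable ψ (volume.restrict (Q ×ˢ (Set.univ : Set ℝ))) →
        Filter.Tendsto (fun n => ∫ p in Q ×ˢ (Set.univ : Set ℝ),
            kineticChi p.2 (u n p.1) * ψ p) Filter.atTop
          (nhds (∫ p in Q ×ˢ (Set.univ : Set ℝ), g p * ψ p))) :
    (∀ᵐ p ∂(volume.restrict (Q ×ˢ (Set.univ : Set ℝ))),
      (0 ≤ p.2 → 0 ≤ g p ∧ g p ≤ 1) ∧ (p.2 ≤ 0 → -1 ≤ g p ∧ g p ≤ 0)) ∧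
    (∀ K : Set (EuclideanSpace ℝ (Fin m)), IsCompact K → K ⊆ Q →
      (∫⁻ p in K ×ˢ (Set.univ : Set ℝ), ENNReal.ofReal |g p|) ≤
        Filter.liminf (fun n => ∫⁻ z in K, ENNReal.ofReal |u n z|) Filter.atTop) ∧
    (∀ᵐ z ∂(volume.restrict Q), Integrable (fun ξ : ℝ => g (z, ξ))) ∧
    (∀ᵐ z ∂(volume.restrict Q), (∫ ξ : ℝ, g (z, ξ)) = ubar z) := by
  have hlsc : ∀ K, IsCompact K → K ⊆ Q →
      ∫⁻ p in K ×ˢ (Set.univ : Set ℝ), ENNReal.ofReal |g p| ≤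
        liminf (fun n => ∫⁻ z in K, ENNReal.ofReal |u n z|) atTop := fun K hK hKQ =>
    lintegral_kineticLimit_le_liminf hum hgm hgb hwkchi hK.measurableSet hKQ hK.measure_lt_top
  have hgK : ∀ K, IsCompact K → K ⊆ Q → Integrable g ((volume.restrict K).prod volume) :=
    fun K hK hKQ => integrable_restrict_prod_of_setLIntegral_lt_top hgm <|
      (hlsc K hK hKQ).trans_lt <| UniformlyIntegrableOn.liminf_lintegral_lt_top (hui K hK hKQ) hum
        (hint K hK hKQ).1 hK.measure_lt_top
  refine ⟨ae_kineticLimit_bounds hQ.measurableSet hum hgm hgb hwkchi, hlsc, ?_, ?_⟩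
  · exact hQ.ae_restrict_of_forall_isCompact fun K hK hKQ => (hgK K hK hKQ).prod_right_ae
  · exact hQ.ae_restrict_of_forall_isCompact fun K hK hKQ =>
      ae_integral_kineticLimit_eq hum hwkchi hK.measurableSet hKQ hK.measure_lt_top
        (hint K hK hKQ).1 (hint K hK hKQ).2 (hui K hK hKQ) (hwk K hK hKQ) (hgK K hK hKQ)

/-- Representation of weak `L¹` limits via the weak-* limit `g` of the kinetic
functions `χ(ξ, uⁿ)`: `g` has values in `[0,1]` for `ξ ≥ 0` and `[−1,0]` for `ξ ≤ 0`,
`∫∫_K |g| ≤ liminf ∫_K |uⁿ|` on every compact `K ⊆ Q` (so `g(z,·) ∈ L¹_ξ` a.e.), and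
`∫_ℝ g(z,ξ) dξ = u(z)` a.e., where `u` is the weak `L¹` limit of `uⁿ`. -/
theorem kinetic_function_represents_weak_limit
    {m : ℕ} (Q : Set (EuclideanSpace ℝ (Fin m))) (hQ : IsOpen Q)
    (u : ℕ → EuclideanSpace ℝ (Fin m) → ℝ) (hum : ∀ n, Measurable (u n))
    (ubar : EuclideanSpace ℝ (Fin m) → ℝ) (hubarm : Measurable ubar)
    (hint : ∀ K : Set (EuclideanSpace ℝ (Fin m)), IsCompact K → K ⊆ Q →
      (∀ n, IntegrableOn (u n) K) ∧ IntegrableOn ubar K)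
    (hui : ∀ K : Set (EuclideanSpace ℝ (Fin m)), IsCompact K → K ⊆ Q →
      ∀ ε : ℝ, 0 < ε → ∃ c : ℝ, ∀ n,
        (∫ z in {z ∈ K | c ≤ |u n z|}, |u n z|) < ε)
    (hwk : ∀ K : Set (EuclideanSpace ℝ (Fin m)), IsCompact K → K ⊆ Q →
      ∀ φ : EuclideanSpace ℝ (Fin m) → ℝ, Measurable φ → (∃ C : ℝ, ∀ z, |φ z| ≤ C) →
        Filter.Tendsto (fun n => ∫ z in K, u n z * φ z) Filter.atTop
          (nhds (∫ z in K, ubar z * φ z)))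
    (g : EuclideanSpace ℝ (Fin m) × ℝ → ℝ) (hgm : Measurable g)
    (hgb : ∃ C : ℝ, ∀ p, |g p| ≤ C)
    (hwkchi : ∀ ψ : EuclideanSpace ℝ (Fin m) × ℝ → ℝ,
      Integrable ψ (volume.restrict (Q ×ˢ (Set.univ : Set ℝ))) →
        Filter.Tendsto (fun n => ∫ p in Q ×ˢ (Set.univ : Set ℝ),
            kineticChi p.2 (u n p.1) * ψ p) Filter.atTop
          (nhds (∫ p in Q ×ˢ (Set.univ : Set ℝ), g p * ψ p))) :
    (∀ᵐ p ∂(volume.restrict (Q ×ˢ (Set.univ : Set ℝ))),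
      (0 ≤ p.2 → 0 ≤ g p ∧ g p ≤ 1) ∧ (p.2 ≤ 0 → -1 ≤ g p ∧ g p ≤ 0)) ∧
    (∀ K : Set (EuclideanSpace ℝ (Fin m)), IsCompact K → K ⊆ Q →
      (∫⁻ p in K ×ˢ (Set.univ : Set ℝ), ENNReal.ofReal |g p|) ≤
        Filter.liminf (fun n => ∫⁻ z in K, ENNReal.ofReal |u n z|) Filter.atTop) ∧
    (∀ᵐ z ∂(volume.restrict Q), Integrable (fun ξ : ℝ => g (z, ξ))) ∧
    (∀ᵐ z ∂(volume.restrict Q), (∫ ξ : ℝ, g (z, ξ)) = ubar z) :=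
  kinetic_function_represents_weak_limit_general Q hQ u hum ubar hint hui hwk g hgm hgb hwkchi
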